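/- arXiv:1202.3033 — 5 statements merged into one kernel-verified Lean document; each statement's English description precedes it below -/
import Mathlib

section
/- For every natural number N ≥ 1 and every real t with |t| < 2πN, the orange-peel curve satisfies the curvature identity z_N''(t) · conj(z_N'(t)) = i · t/√((2πN)² − t²); in particular its signed curvature at time t is t/√((2πN)² − t²), which vanishes at t = 0 (the equator) and tends to +∞ as t → 2πN (the pole). -/
/-!
The velocity `z_N'(t) = exp(-i θ(t))` with `θ(t) = √((2πN)² - t²)` is a unit vector turning with
angular speed `-θ'(t)`, so `z_N'' · conj z_N' = -i θ'(t) |z_N'|² = -i θ'(t)`, and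
`θ'(t) = -t / √((2πN)² - t²)` inside the interval `|t| < 2πN`.
-/

/-- The orange-peel curve of width `1/N`: `z_N(t) = ∫_0^t exp(-i √((2πN)² - u²)) du`. -/
noncomputable def orangePeel (N : ℕ) (t : ℝ) : ℂ :=
  ∫ u in (0:ℝ)..t, Complex.exp (-Complex.I * Real.sqrt ((2 * Real.pi * N) ^ 2 - u ^ 2))

open Complex ComplexConjugate

lemma deriv_orangePeel (N : ℕ) :
    deriv (orangePeel N) = fun t => cexp (-I * Real.sqrt ((2 * Real.pi * N) ^ 2 - t ^ 2)) := by
  funext t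
  exact (by fun_prop : Continuous fun u : ℝ =>
    cexp (-I * Real.sqrt ((2 * Real.pi * N) ^ 2 - u ^ 2))).deriv_integral _ _ _

lemma hasDerivAt_sqrt_sub_sq {a t : ℝ} (ht : t ^ 2 < a) :
    HasDerivAt (fun u => Real.sqrt (a - u ^ 2)) (-t / Real.sqrt (a - t ^ 2)) t := by
  have hsqrt := ((hasDerivAt_pow 2 t).const_sub a).sqrt (sub_pos.2 ht).ne'
  convert hsqrt using 1
  field_simp
  push_cast
  ring

lemma deriv_cexp_neg_I_mul_mul_conj {θ : ℝ → ℝ} {θ' t : ℝ} (hθ : HasDerivAt θ θ' t) :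
    deriv (fun u => cexp (-I * θ u)) t * conj (cexp (-I * θ t)) = -I * θ' := by
  have hunit : cexp (-I * θ t) * conj (cexp (-I * θ t)) = 1 := by
    rw [← exp_conj, ← exp_add, map_mul, map_neg, conj_I, conj_ofReal]
    simp
  rw [((hθ.ofReal_comp.const_mul (-I)).cexp).deriv]
  linear_combination (-I * θ') * hunit

theorem orangePeel_curvature_general (N : ℕ) (t : ℝ) (ht : |t| < 2 * Real.pi * N) :
    deriv (deriv (orangePeel N)) t * (starRingEnd ℂ) (deriv (orangePeel N) t) =
      Complex.I * ((t : ℂ) / (Real.sqrt ((2 * Real.pi * N) ^ 2 - t ^ 2) : ℝ)) := by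
  have hts : t ^ 2 < (2 * Real.pi * N) ^ 2 := sq_lt_sq' (abs_lt.1 ht).1 (abs_lt.1 ht).2
  rw [deriv_orangePeel, deriv_cexp_neg_I_mul_mul_conj (hasDerivAt_sqrt_sub_sq hts)]
  push_cast
  ring

/-- For `N ≥ 1` and `|t| < 2πN`, the orange-peel curve satisfies the curvature identity
`z_N''(t) · conj(z_N'(t)) = i · t / √((2πN)² − t²)`; in particular its signed curvature
at time `t` is `t / √((2πN)² − t²)`. -/
theorem orangePeel_curvature (N : ℕ) (hN : 1 ≤ N) (t : ℝ) (ht : |t| < 2 * Real.pi * N) :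
    deriv (deriv (orangePeel N)) t * (starRingEnd ℂ) (deriv (orangePeel N) t) =
      Complex.I * ((t : ℂ) / (Real.sqrt ((2 * Real.pi * N) ^ 2 - t ^ 2) : ℝ)) :=
  orangePeel_curvature_general N t ht
end

section
/- For every real a > 0 and every real t with |t| ≤ a, |∫_0^t exp(−i·√(a² − u²)) du − ∫_0^t exp(−i·(a − u²/(2a))) du| ≤ |t|⁵/(10·a³), where √ denotes the real square root. -/
/-!
Since `x ↦ exp (I * x)` is 1-Lipschitz, the two integrands differ pointwise by at most the
difference of the phases. Writing `s = √(a² - u²)` and `q = a - u²/(2a)`, one has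
`q² - s² = u⁴/(4a²)` and `q + s ≥ a/2`, so `0 ≤ q - s ≤ u⁴/(2a³)`; integrating this bound
from `0` to `t` gives `|t|⁵/(10a³)`.
-/

open Complex in
theorem norm_exp_I_mul_ofReal_sub_exp_I_mul_ofReal_le (x y : ℝ) :
    ‖exp (I * x) - exp (I * y)‖ ≤ |x - y| := by
  have hfactor : exp (I * x) - exp (I * y) = exp (I * y) * (exp (I * ↑(x - y)) - 1) := by
    rw [mul_sub, ← exp_add]; push_cast; ring_nf
  rw [hfactor, norm_mul, norm_exp_I_mul_ofReal, one_mul, ← Real.norm_eq_abs]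
  exact Real.norm_exp_I_mul_ofReal_sub_one_le

section QuadraticApproximation

variable {a u : ℝ}

theorem half_le_sub_sq_div (ha : 0 < a) (hu : u ^ 2 ≤ a ^ 2) : a / 2 ≤ a - u ^ 2 / (2 * a) := by
  rw [le_sub_comm, div_le_iff₀ (by positivity)]
  nlinarith

theorem sqrt_sq_sub_sq_le_sub_sq_div (ha : 0 < a) (hu : u ^ 2 ≤ a ^ 2) :
    √(a ^ 2 - u ^ 2) ≤ a - u ^ 2 / (2 * a) := by
  have hsq : (a - u ^ 2 / (2 * a)) ^ 2 = a ^ 2 - u ^ 2 + (u ^ 2 / (2 * a)) ^ 2 := by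
    field_simp; ring
  rw [Real.sqrt_le_iff, hsq]
  exact ⟨by linarith [half_le_sub_sq_div ha hu], by nlinarith [sq_nonneg (u ^ 2 / (2 * a))]⟩

theorem sub_sq_div_sub_sqrt_sq_sub_sq_le (ha : 0 < a) (hu : u ^ 2 ≤ a ^ 2) :
    a - u ^ 2 / (2 * a) - √(a ^ 2 - u ^ 2) ≤ u ^ 4 / (2 * a ^ 3) := by
  have hle := sqrt_sq_sub_sq_le_sub_sq_div ha hu
  have hq := half_le_sub_sq_div ha hu
  set q := a - u ^ 2 / (2 * a) with hq_def
  set s := √(a ^ 2 - u ^ 2)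
  have hs2 : s ^ 2 = a ^ 2 - u ^ 2 := Real.sq_sqrt (by linarith)
  have hprod : (q - s) * (q + s) * (4 * a ^ 2) = u ^ 4 := by
    rw [show (q - s) * (q + s) = q ^ 2 - s ^ 2 by ring, hs2, hq_def]; field_simp; ring
  have hsum : a / 2 ≤ q + s := by linarith [Real.sqrt_nonneg (a ^ 2 - u ^ 2)]
  rw [le_div_iff₀ (by positivity)]
  nlinarith [mul_le_mul_of_nonneg_left hsum (sub_nonneg.2 hle), sq_nonneg a]

open Complex in
theorem norm_exp_sqrt_phase_sub_exp_quadratic_phase_le (ha : 0 < a) (hu : u ^ 2 ≤ a ^ 2) :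
    ‖exp (-I * √(a ^ 2 - u ^ 2)) - exp (-I * (a - u ^ 2 / (2 * a)))‖ ≤ u ^ 4 / (2 * a ^ 3) := by
  have hcast : (a - u ^ 2 / (2 * a) : ℂ) = ((a - u ^ 2 / (2 * a) : ℝ) : ℂ) := by push_cast; rfl
  rw [hcast, neg_mul, neg_mul, ← mul_neg, ← mul_neg, ← ofReal_neg, ← ofReal_neg]
  refine (norm_exp_I_mul_ofReal_sub_exp_I_mul_ofReal_le _ _).trans ?_
  rw [neg_sub_neg, abs_of_nonneg (sub_nonneg.2 (sqrt_sq_sub_sq_le_sub_sq_div ha hu))]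
  exact sub_sq_div_sub_sqrt_sq_sub_sq_le ha hu

end QuadraticApproximation

/-- The error made when replacing the exact phase `−√(a² − u²)` of the orange-peel curve
by its quadratic approximation `−(a − u²/(2a))`: for `a > 0` and `|t| ≤ a`,
`|∫_0^t exp(−i √(a² − u²)) du − ∫_0^t exp(−i (a − u²/(2a))) du| ≤ |t|⁵/(10 a³)`. -/
theorem phase_approx_integral_error (a : ℝ) (ha : 0 < a) (t : ℝ) (ht : |t| ≤ a) :
    ‖(∫ u in (0:ℝ)..t, Complex.exp (-Complex.I * Real.sqrt (a ^ 2 - u ^ 2))) -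
      ∫ u in (0:ℝ)..t, Complex.exp (-Complex.I * (a - u ^ 2 / (2 * a)))‖ ≤
    |t| ^ 5 / (10 * a ^ 3) := by
  rw [← intervalIntegral.integral_sub (by apply Continuous.intervalIntegrable; fun_prop)
    (by apply Continuous.intervalIntegrable; fun_prop)]
  have hpointwise : ∀ u ∈ Set.uIoc 0 t, ‖Complex.exp (-Complex.I * Real.sqrt (a ^ 2 - u ^ 2)) -
      Complex.exp (-Complex.I * (a - u ^ 2 / (2 * a)))‖ ≤ u ^ 4 / (2 * a ^ 3) := by
    intro u hu
    have hut : |u| ≤ |t| := by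
      simpa only [sub_zero] using Set.abs_sub_left_of_mem_uIcc (Set.uIoc_subset_uIcc hu)
    exact norm_exp_sqrt_phase_sub_exp_quadratic_phase_le ha
      (sq_le_sq.2 (by rw [abs_of_pos ha]; exact hut.trans ht))
  have hbound_integral : ∫ u in (0:ℝ)..t, u ^ 4 / (2 * a ^ 3) = t ^ 5 / (10 * a ^ 3) := by
    rw [intervalIntegral.integral_div, integral_pow]; ring
  calc _ ≤ |∫ u in (0:ℝ)..t, u ^ 4 / (2 * a ^ 3)| :=
        intervalIntegral.norm_integral_le_abs_of_norm_le
          (MeasureTheory.ae_restrict_of_forall_mem measurableSet_uIoc hpointwise)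
          (by apply Continuous.intervalIntegrable; fun_prop)
    _ = |t| ^ 5 / (10 * a ^ 3) := by
        rw [hbound_integral, abs_div, abs_pow, abs_of_pos (by positivity : (0:ℝ) < 10 * a ^ 3)]
end

section
/- (Main theorem.) For every integer N ≥ 1 and every real T with |T| ≤ √(πN), the rescaled orange-peel curve approximates the Euler spiral: |(1/√(4πN)) · z_N(√(4πN)·T) − F(T)| ≤ |T|⁵/(5πN). In particular, whenever |T| is small compared with N^{1/5} (e.g. whenever T ≪ N^{0.2}), the part of the orange-peel curve of width 1/N parameterized between −√(4πN)·T and √(4πN)·T is, after rescaling by 1/√(4πN), a good approximation of the part of the Euler spiral parameterized between −T and T. -/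
/-- The Euler spiral `F(T) = ∫_0^T exp(i v²) dv`. -/
noncomputable def eulerSpiral (T : ℝ) : ℂ :=
  ∫ v in (0:ℝ)..T, Complex.exp (Complex.I * v ^ 2)

/-!
After the substitution `u = √(4πN) v` the rescaled orange-peel curve is `∫_0^T exp(-i s(v)) dv`
with `s(v) = √((2πN - v²)² - v⁴)`, while `exp(i v²) = exp(-i (2πN - v²))` because `2πN ∈ 2πℤ`.
The phases differ by `x - √(x² - w²) = w² / (x + √(x² - w²)) ≤ w² / x` with `x = 2πN - v² ≥ πN`
and `w = v²`, so the integrands differ by at most `v⁴/(πN)`, whose integral is `|T|⁵/(5πN)`.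
-/

open Complex Real

lemma norm_exp_I_mul_sub_exp_I_mul_le (x y : ℝ) :
    ‖cexp (I * x) - cexp (I * y)‖ ≤ |x - y| := by
  have hfactor :
      cexp (I * x) - cexp (I * y) = cexp (I * y) * (cexp (I * ((x - y : ℝ) : ℂ)) - 1) := by
    rw [mul_sub, mul_one, ← Complex.exp_add]
    push_cast
    ring_nf
  rw [hfactor, norm_mul, Complex.norm_exp_I_mul_ofReal, one_mul]
  exact Real.norm_exp_I_mul_ofReal_sub_one_le

lemma abs_sub_sqrt_sq_sub_sq_le {x : ℝ} (hx : 0 ≤ x) (w : ℝ) :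
    |x - √(x ^ 2 - w ^ 2)| ≤ w ^ 2 / x := by
  rcases hx.eq_or_lt with rfl | hx
  · simp [Real.sqrt_eq_zero', sq_nonneg]
  set s := √(x ^ 2 - w ^ 2)
  have hs : 0 ≤ s := Real.sqrt_nonneg _
  have hsx : s ≤ x := Real.sqrt_le_iff.mpr ⟨hx.le, by nlinarith⟩
  have hs_sq : x ^ 2 - w ^ 2 ≤ s ^ 2 := by rw [Real.sq_sqrt']; exact le_max_left _ _
  rw [abs_of_nonneg (sub_nonneg.mpr hsx), le_div_iff₀ hx]
  nlinarith [mul_le_mul_of_nonneg_left hsx hs]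

lemma norm_exp_orangePeel_phase_sub_exp_I_mul_sq_le {N : ℕ} (hN : 1 ≤ N) {v : ℝ}
    (hv : |v| ≤ √(π * N)) :
    ‖cexp (-I * √((2 * π * N) ^ 2 - (√(4 * π * N) * v) ^ 2)) - cexp (I * v ^ 2)‖ ≤
      v ^ 4 / (π * N) := by
  set A := π * N
  have hA : 0 < A := mul_pos pi_pos (by exact_mod_cast hN)
  have hvA : v ^ 2 ≤ A := by
    simpa [sq_abs, Real.sq_sqrt hA.le] using pow_le_pow_left₀ (abs_nonneg v) hv 2
  have hradicand :
      (2 * π * N) ^ 2 - (√(4 * π * N) * v) ^ 2 = (2 * A - v ^ 2) ^ 2 - (v ^ 2) ^ 2 := by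
    rw [mul_pow √_ v, Real.sq_sqrt (by positivity)]
    ring
  have hperiod : cexp (I * v ^ 2) = cexp (I * ((-(2 * A - v ^ 2) : ℝ) : ℂ)) := by
    rw [← mul_one (cexp (I * ((-(2 * A - v ^ 2) : ℝ) : ℂ))), ← Complex.exp_int_mul_two_pi_mul_I N,
      ← Complex.exp_add]
    congr 1
    push_cast [A]
    ring
  rw [hradicand, hperiod, neg_mul, ← mul_neg, ← Complex.ofReal_neg]
  calc _ ≤ |-√((2 * A - v ^ 2) ^ 2 - (v ^ 2) ^ 2) - -(2 * A - v ^ 2)| :=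
        norm_exp_I_mul_sub_exp_I_mul_le _ _
    _ = |(2 * A - v ^ 2) - √((2 * A - v ^ 2) ^ 2 - (v ^ 2) ^ 2)| := by
        rw [neg_sub_neg]
    _ ≤ (v ^ 2) ^ 2 / (2 * A - v ^ 2) := abs_sub_sqrt_sq_sub_sq_le (by linarith) _
    _ ≤ (v ^ 2) ^ 2 / A := div_le_div_of_nonneg_left (sq_nonneg _) hA (by linarith)
    _ = v ^ 4 / A := by ring

lemma one_div_mul_orangePeel_mul (N : ℕ) {a : ℝ} (ha : a ≠ 0) (T : ℝ) :
    (1 / (a : ℂ)) * orangePeel N (a * T) =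
      ∫ v in (0:ℝ)..T, cexp (-I * √((2 * π * N) ^ 2 - (a * v) ^ 2)) := by
  rw [orangePeel, intervalIntegral.integral_comp_mul_left
    (fun u => cexp (-I * √((2 * π * N) ^ 2 - u ^ 2))) ha]
  simp [Complex.real_smul, one_div]

/-- Main theorem: for every integer `N ≥ 1` and every real `T` with `|T| ≤ √(πN)`,
the rescaled orange-peel curve approximates the Euler spiral:
`|(1/√(4πN)) · z_N(√(4πN) T) − F(T)| ≤ |T|⁵/(5πN)`. -/
theorem rescaled_orangePeel_approx_eulerSpiral (N : ℕ) (hN : 1 ≤ N) (T : ℝ)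
    (hT : |T| ≤ Real.sqrt (Real.pi * N)) :
    ‖(1 / (Real.sqrt (4 * Real.pi * N) : ℂ)) *
        orangePeel N (Real.sqrt (4 * Real.pi * N) * T) - eulerSpiral T‖ ≤
      |T| ^ 5 / (5 * Real.pi * N) := by
  have hA : 0 < π * N := mul_pos pi_pos (by exact_mod_cast hN)
  have ha : √(4 * π * N) ≠ 0 := (Real.sqrt_pos.mpr (by linarith)).ne'
  have hpointwise : ∀ v ∈ Set.uIoc 0 T,
      ‖cexp (-I * √((2 * π * N) ^ 2 - (√(4 * π * N) * v) ^ 2)) - cexp (I * v ^ 2)‖ ≤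
        v ^ 4 / (π * N) := by
    intro v hv
    have hvT : |v| ≤ |T| := by simpa using Set.abs_sub_left_of_mem_uIcc (Set.uIoc_subset_uIcc hv)
    exact norm_exp_orangePeel_phase_sub_exp_I_mul_sq_le hN (hvT.trans hT)
  rw [one_div_mul_orangePeel_mul N ha, eulerSpiral, ← intervalIntegral.integral_sub]
  · calc _ ≤ |∫ v in (0:ℝ)..T, v ^ 4 / (π * N)| :=
          intervalIntegral.norm_integral_le_abs_of_norm_le
            (MeasureTheory.ae_restrict_of_forall_mem measurableSet_uIoc hpointwise)
            (Continuous.intervalIntegrable (by fun_prop) _ _)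
      _ = |T| ^ 5 / (5 * π * N) := by
          rw [intervalIntegral.integral_div, integral_pow, abs_div, abs_div, abs_of_pos hA]
          norm_num [abs_pow]
          ring
  all_goals exact Continuous.intervalIntegrable (by fun_prop) _ _
end

section
/- For every fixed real T, the rescaled orange-peel curves converge pointwise to the Euler spiral: (1/√(4πN)) · z_N(√(4πN)·T) tends to F(T) as the integer N tends to infinity. -/
open Filter

/-!
Substituting `u = √(4πN) v` turns the rescaled curve into `∫_0^T exp(-i √(b² - v⁴)) dv` with
`b = 2πN - v²`. Since `0 ≤ b - √(b² - v⁴) ≤ v⁴ / b` and `exp(-2πiN) = 1`, the integrand tends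
to `exp(i v²)` pointwise; it has modulus one, so dominated convergence concludes.
-/

open Topology MeasureTheory

namespace Real

lemma sub_sqrt_sq_sub_nonneg {b x : ℝ} (hb : 0 ≤ b) (hx : 0 ≤ x) : 0 ≤ b - √(b ^ 2 - x) := by
  have : √(b ^ 2 - x) ≤ b := by
    calc √(b ^ 2 - x) ≤ √(b ^ 2) := sqrt_le_sqrt (by linarith)
      _ = b := sqrt_sq hb
  linarith

lemma sub_sqrt_sq_sub_le_div {b x : ℝ} (hb : 0 < b) (hx : 0 ≤ x) :
    b - √(b ^ 2 - x) ≤ x / b := by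
  rw [le_div_iff₀ hb]
  rcases le_or_gt x (b ^ 2) with hxb | hxb
  · have hs := sq_sqrt (sub_nonneg.mpr hxb)
    nlinarith [sqrt_nonneg (b ^ 2 - x)]
  · rw [sqrt_eq_zero_of_nonpos (by linarith)]
    nlinarith

end Real

lemma tendsto_sub_sqrt_sq_sub_nhds_zero {α : Type*} {l : Filter α} {b : α → ℝ}
    (hb : Tendsto b l atTop) {x : ℝ} (hx : 0 ≤ x) :
    Tendsto (fun a => b a - √(b a ^ 2 - x)) l (𝓝 0) := by
  have hpos : ∀ᶠ a in l, 0 < b a := hb.eventually_gt_atTop 0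
  refine squeeze_zero' ?_ ?_ ((tendsto_const_nhds (x := x)).div_atTop hb)
  · filter_upwards [hpos] with a ha using Real.sub_sqrt_sq_sub_nonneg ha.le hx
  · filter_upwards [hpos] with a ha using Real.sub_sqrt_sq_sub_le_div ha hx

lemma tendsto_exp_neg_I_mul_sqrt_rescaled (v : ℝ) :
    Tendsto (fun N : ℕ => Complex.exp (-Complex.I *
        √((2 * Real.pi * N) ^ 2 - (√(4 * Real.pi * N) * v) ^ 2)))
      atTop (𝓝 (Complex.exp (Complex.I * v ^ 2))) := by
  set b : ℕ → ℝ := fun N => 2 * Real.pi * N - v ^ 2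
  set d : ℕ → ℝ := fun N => b N - √(b N ^ 2 - (v ^ 2) ^ 2)
  have hb : Tendsto b atTop atTop := tendsto_atTop_add_const_right _ _
    (tendsto_natCast_atTop_atTop.const_mul_atTop (by positivity))
  have hd : Tendsto d atTop (𝓝 0) := tendsto_sub_sqrt_sq_sub_nhds_zero hb (by positivity)
  have hphase (N : ℕ) : Complex.exp (-Complex.I *
      √((2 * Real.pi * N) ^ 2 - (√(4 * Real.pi * N) * v) ^ 2))
      = Complex.exp (Complex.I * (v ^ 2 + d N)) := by
    have hsq : (2 * Real.pi * N) ^ 2 - (√(4 * Real.pi * N) * v) ^ 2 = b N ^ 2 - (v ^ 2) ^ 2 := by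
      rw [mul_pow (√_) v, Real.sq_sqrt (by positivity)]
      ring
    rw [hsq, ← Complex.exp_periodic.sub_nat_mul_eq N (x := Complex.I * (v ^ 2 + d N))]
    congr 1
    simp only [d, b]
    push_cast
    ring
  have hcont : Continuous fun t : ℝ => Complex.exp (Complex.I * ((v : ℂ) ^ 2 + t)) := by
    fun_prop
  have hlim := (hcont.tendsto 0).comp hd
  rw [Complex.ofReal_zero, add_zero] at hlim
  exact hlim.congr fun N => (hphase N).symm

lemma tendsto_integral_rescaled_orangePeel (T : ℝ) :
    Tendsto (fun N : ℕ => ∫ v in (0 : ℝ)..T, Complex.exp (-Complex.I *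
        √((2 * Real.pi * N) ^ 2 - (√(4 * Real.pi * N) * v) ^ 2)))
      atTop (𝓝 (eulerSpiral T)) := by
  apply intervalIntegral.tendsto_integral_filter_of_dominated_convergence (fun _ => 1)
  · exact Eventually.of_forall fun N => (by fun_prop : Continuous _).aestronglyMeasurable
  · exact Eventually.of_forall fun N => ae_of_all _ fun v _ => by simp [Complex.norm_exp]
  · exact intervalIntegrable_const
  · exact ae_of_all _ fun v _ => tendsto_exp_neg_I_mul_sqrt_rescaled v

/-- For every fixed real `T`, the rescaled orange-peel curves converge pointwise to the
Euler spiral: `(1/√(4πN)) · z_N(√(4πN) T) → F(T)` as `N → ∞`. -/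
theorem rescaled_orangePeel_tendsto_eulerSpiral (T : ℝ) :
    Tendsto (fun N : ℕ =>
        (1 / (Real.sqrt (4 * Real.pi * N) : ℂ)) *
          orangePeel N (Real.sqrt (4 * Real.pi * N) * T))
      atTop (nhds (eulerSpiral T)) := by
  refine (tendsto_integral_rescaled_orangePeel T).congr' ?_
  filter_upwards [eventually_ge_atTop 1] with N hN
  have hc : √(4 * Real.pi * N) ≠ 0 := (Real.sqrt_pos.mpr (by positivity)).ne'
  rw [orangePeel, intervalIntegral.integral_comp_mul_left
    (fun u : ℝ => Complex.exp (-Complex.I * √((2 * Real.pi * N) ^ 2 - u ^ 2))) hc, mul_zero,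
    Complex.real_smul, one_div, Complex.ofReal_inv]
end

section
/- The Euler spiral winds around the two limit points ±(√(π/8), √(π/8)): as t → +∞, F(t) tends to √(π/8)·(1 + i), and as t → −∞, F(t) tends to −√(π/8)·(1 + i). Equivalently, the improper Fresnel integrals satisfy ∫_0^∞ cos(v²) dv = ∫_0^∞ sin(v²) dv = √(π/8). -/
/-!
For `0 < re b` the Gaussian integral is `∫₀^∞ exp(-b v²) dv = (π / b)^(1/2) / 2`. Integrating by parts
against `d/dv [exp(-b v²) / (-2 b v)]` bounds every tail `∫_T^S exp(-b v²) dv` by `1 / (‖b‖ T)`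
uniformly on `0 ≤ re b`, so `∫₀^T exp(-b v²) dv` lies within `1 / (‖b‖ T)` of `(π / b)^(1/2) / 2`.
Both sides are continuous in `b`, so the estimate passes to the boundary `re b = 0`, in particular
to `b = -i`, where `(π / -i)^(1/2) / 2 = √(π/8) (1 + i)`. The limit at `-∞` follows because the
integrand is even.
-/

open Filter

open Complex Real Set MeasureTheory intervalIntegral Topology
open scoped Interval

section GaussianTail

variable {b : ℂ}

lemma norm_cexp_neg_mul_sq_le_one (hb : 0 ≤ b.re) (v : ℝ) : ‖cexp (-b * v ^ 2)‖ ≤ 1 := by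
  rw [norm_exp, Real.exp_le_one_iff]
  have : (-b * (v : ℂ) ^ 2).re = -(b.re * v ^ 2) := by simp [← ofReal_pow]
  rw [this]
  nlinarith [sq_nonneg v]

lemma hasDerivAt_cexp_neg_mul_sq_div (hb0 : b ≠ 0) {v : ℝ} (hv : v ≠ 0) :
    HasDerivAt (fun v : ℝ => cexp (-b * v ^ 2) / (-2 * b * v))
      (cexp (-b * v ^ 2) + cexp (-b * v ^ 2) / (2 * b * v ^ 2)) v := by
  have hexp : HasDerivAt (fun v : ℝ => cexp (-b * v ^ 2)) (cexp (-b * v ^ 2) * (-2 * b * v)) v := by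
    have := ((hasDerivAt_pow 2 (v : ℂ)).comp_ofReal.const_mul (-b)).cexp
    convert this using 1
    push_cast; ring
  have hden : HasDerivAt (fun v : ℝ => -2 * b * (v : ℂ)) (-2 * b) v := by
    simpa using (hasDerivAt_id (v : ℂ)).comp_ofReal.const_mul (-2 * b)
  have hv' : (v : ℂ) ≠ 0 := ofReal_ne_zero.mpr hv
  refine (hexp.div hden (by simp [hb0, hv'])).congr_deriv ?_
  field_simp
  ring

lemma integral_cexp_neg_mul_sq_eq (hb0 : b ≠ 0) {T S : ℝ} (hT : 0 < T) (hTS : T ≤ S) :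
    ∫ v in T..S, cexp (-b * v ^ 2) =
      cexp (-b * S ^ 2) / (-2 * b * S) - cexp (-b * T ^ 2) / (-2 * b * T) -
        ∫ v in T..S, cexp (-b * v ^ 2) / (2 * b * v ^ 2) := by
  have hpos : ∀ v ∈ [[T, S]], 0 < v := fun v hv => hT.trans_le (uIcc_of_le hTS ▸ hv).1
  have he : IntervalIntegrable (fun v : ℝ => cexp (-b * v ^ 2)) volume T S :=
    (by fun_prop : Continuous _).intervalIntegrable _ _
  have hr : IntervalIntegrable (fun v : ℝ => cexp (-b * v ^ 2) / (2 * b * v ^ 2)) volume T S :=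
    ContinuousOn.intervalIntegrable <| (by fun_prop : Continuous _).continuousOn.div (by fun_prop)
      fun v hv => by simp [hb0, (hpos v hv).ne']
  rw [eq_sub_iff_add_eq, ← integral_add he hr]
  exact integral_eq_sub_of_hasDerivAt
    (fun v hv => hasDerivAt_cexp_neg_mul_sq_div hb0 (hpos v hv).ne') (he.add hr)

lemma norm_integral_cexp_neg_mul_sq_div_le (hb : 0 ≤ b.re) (hb0 : b ≠ 0) {T S : ℝ} (hT : 0 < T)
    (hTS : T ≤ S) :
    ‖∫ v in T..S, cexp (-b * v ^ 2) / (2 * b * v ^ 2)‖ ≤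
      1 / (2 * ‖b‖ * T) - 1 / (2 * ‖b‖ * S) := by
  have hpos : ∀ v ∈ [[T, S]], 0 < v := fun v hv => hT.trans_le (uIcc_of_le hTS ▸ hv).1
  calc ‖∫ v in T..S, cexp (-b * v ^ 2) / (2 * b * v ^ 2)‖
      ≤ ∫ v in T..S, (2 * ‖b‖)⁻¹ * v ^ (-2 : ℤ) := by
        refine norm_integral_le_of_norm_le hTS (ae_of_all _ fun v hv => ?_) ?_
        · have hv : 0 < v := hpos v (Ioc_subset_Icc_self.trans Icc_subset_uIcc hv)
          calc ‖cexp (-b * v ^ 2) / (2 * b * v ^ 2)‖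
              = ‖cexp (-b * v ^ 2)‖ / (2 * ‖b‖ * v ^ 2) := by simp
            _ ≤ 1 / (2 * ‖b‖ * v ^ 2) :=
              div_le_div_of_nonneg_right (norm_cexp_neg_mul_sq_le_one hb v) (by positivity)
            _ = (2 * ‖b‖)⁻¹ * v ^ (-2 : ℤ) := by rw [zpow_neg, zpow_two]; field_simp
        · exact (continuousOn_const.mul (continuousOn_id.zpow₀ _ fun v hv =>
            Or.inl (hpos v hv).ne')).intervalIntegrable
    _ = 1 / (2 * ‖b‖ * T) - 1 / (2 * ‖b‖ * S) := by
        rw [intervalIntegral.integral_const_mul,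
          integral_zpow (Or.inr ⟨by norm_num, fun h => (hpos 0 h).false⟩)]
        norm_num
        field_simp
        ring

lemma norm_integral_cexp_neg_mul_sq_le (hb : 0 ≤ b.re) (hb0 : b ≠ 0) {T S : ℝ} (hT : 0 < T)
    (hTS : T ≤ S) : ‖∫ v in T..S, cexp (-b * v ^ 2)‖ ≤ 1 / (‖b‖ * T) := by
  have hboundary : ∀ v : ℝ, 0 < v → ‖cexp (-b * v ^ 2) / (-2 * b * v)‖ ≤ 1 / (2 * ‖b‖ * v) :=
    fun v hv => by
      rw [norm_div, show ‖-2 * b * (v : ℂ)‖ = 2 * ‖b‖ * v by simp [abs_of_pos hv] ]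
      exact div_le_div_of_nonneg_right (norm_cexp_neg_mul_sq_le_one hb v) (by positivity)
  have hb' : 0 < ‖b‖ := norm_pos_iff.mpr hb0
  rw [integral_cexp_neg_mul_sq_eq hb0 hT hTS]
  calc _ ≤ ‖cexp (-b * S ^ 2) / (-2 * b * S)‖ + ‖cexp (-b * T ^ 2) / (-2 * b * T)‖ +
        ‖∫ v in T..S, cexp (-b * v ^ 2) / (2 * b * v ^ 2)‖ :=
        (norm_sub_le _ _).trans (by gcongr; exact norm_sub_le _ _)
    _ ≤ 1 / (2 * ‖b‖ * S) + 1 / (2 * ‖b‖ * T) + (1 / (2 * ‖b‖ * T) - 1 / (2 * ‖b‖ * S)) := by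
        gcongr
        exacts [hboundary S (hT.trans_le hTS), hboundary T hT,
          norm_integral_cexp_neg_mul_sq_div_le hb hb0 hT hTS]
    _ = 1 / (‖b‖ * T) := by field_simp; ring

lemma norm_sub_integral_cexp_neg_mul_sq_le_of_re_pos (hb : 0 < b.re) {T : ℝ} (hT : 0 < T) :
    ‖(π / b) ^ (1 / 2 : ℂ) / 2 - ∫ v in 0..T, cexp (-b * v ^ 2)‖ ≤ 1 / (‖b‖ * T) := by
  have hint : Continuous fun v : ℝ => cexp (-b * v ^ 2) := by fun_prop
  have hlim : Tendsto (fun S => ∫ v in 0..S, cexp (-b * v ^ 2)) atTop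
      (𝓝 ((π / b) ^ (1 / 2 : ℂ) / 2)) :=
    integral_gaussian_complex_Ioi hb ▸
      intervalIntegral_tendsto_integral_Ioi 0 (integrable_cexp_neg_mul_sq hb).integrableOn tendsto_id
  refine le_of_tendsto (hlim.sub_const _).norm ?_
  filter_upwards [eventually_ge_atTop T] with S hS
  rw [integral_interval_sub_left (hint.intervalIntegrable _ _) (hint.intervalIntegrable _ _)]
  exact norm_integral_cexp_neg_mul_sq_le hb.le (fun h => by simp [h] at hb) hT hS

lemma pi_div_mem_slitPlane (hb : 0 ≤ b.re) (hb0 : b ≠ 0) : (π : ℂ) / b ∈ slitPlane := by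
  have hn : 0 < normSq b := normSq_pos.mpr hb0
  rw [mem_slitPlane_iff, div_re, div_im]
  rcases hb.lt_or_eq with hre | hre
  · left
    simp only [ofReal_re, ofReal_im, zero_mul]
    positivity
  · right
    have him : b.im ≠ 0 := fun h => hb0 (Complex.ext hre.symm h)
    simp [pi_ne_zero, him, hn.ne']

lemma norm_sub_integral_cexp_neg_mul_sq_le (hb : 0 ≤ b.re) (hb0 : b ≠ 0) {T : ℝ} (hT : 0 < T) :
    ‖(π / b) ^ (1 / 2 : ℂ) / 2 - ∫ v in 0..T, cexp (-b * v ^ 2)‖ ≤ 1 / (‖b‖ * T) := by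
  have hG : ContinuousAt (fun c : ℂ => (π / c) ^ (1 / 2 : ℂ) / 2) b :=
    ((continuousAt_const.div continuousAt_id hb0).cpow continuousAt_const
      (pi_div_mem_slitPlane hb hb0)).div_const 2
  have hF : Continuous fun c : ℂ => ∫ v in 0..T, cexp (-c * v ^ 2) :=
    continuous_parametric_intervalIntegral_of_continuous' (by fun_prop) 0 T
  have hpath : Tendsto (fun ε : ℝ => b + ε) (𝓝[>] 0) (𝓝 b) := by
    have : Continuous fun ε : ℝ => b + ε := by fun_prop
    exact tendsto_nhdsWithin_of_tendsto_nhds (this.tendsto' 0 b (by simp))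
  have hlhs := ((hG.tendsto.comp hpath).sub (hF.continuousAt.tendsto.comp hpath)).norm
  have hrhs : Tendsto (fun ε : ℝ => 1 / (‖b + ε‖ * T)) (𝓝[>] 0) (𝓝 (1 / (‖b‖ * T))) :=
    tendsto_const_nhds.div (hpath.norm.mul_const T) (by positivity)
  refine le_of_tendsto_of_tendsto hlhs hrhs ?_
  filter_upwards [self_mem_nhdsWithin] with ε (hε : 0 < ε)
  exact norm_sub_integral_cexp_neg_mul_sq_le_of_re_pos (by simp; linarith) hT

theorem tendsto_integral_cexp_neg_mul_sq (hb : 0 ≤ b.re) (hb0 : b ≠ 0) :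
    Tendsto (fun T => ∫ v in 0..T, cexp (-b * v ^ 2)) atTop (𝓝 ((π / b) ^ (1 / 2 : ℂ) / 2)) := by
  have hbound : Tendsto (fun T : ℝ => 1 / (‖b‖ * T)) atTop (𝓝 0) :=
    tendsto_const_nhds.div_atTop (tendsto_id.const_mul_atTop (norm_pos_iff.mpr hb0))
  rw [tendsto_iff_norm_sub_tendsto_zero]
  refine squeeze_zero' (.of_forall fun _ => norm_nonneg _) ?_ hbound
  filter_upwards [eventually_gt_atTop 0] with T hT
  rw [norm_sub_rev]
  exact norm_sub_integral_cexp_neg_mul_sq_le hb hb0 hT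

end GaussianTail

lemma cpow_one_half_pi_div_neg_I :
    ((π : ℂ) / -I) ^ (1 / 2 : ℂ) / 2 = (√(π / 8) : ℂ) * (1 + I) := by
  have hpi : (π : ℂ) / -I = π * I := by rw [div_neg, div_I]; ring
  have hsqrt : √(π / 2) = 2 * √(π / 8) := by
    rw [show π / 2 = 2 ^ 2 * (π / 8) by ring, Real.sqrt_mul (by positivity), Real.sqrt_sq zero_le_two]
  rw [hpi, one_div]
  apply Complex.ext <;>
    simp [cpow_inv_two_re, cpow_inv_two_im_eq_sqrt, pi_pos.le, abs_of_pos pi_pos, hsqrt]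

lemma intervalIntegral.integral_zero_neg_of_even {E : Type*} [NormedAddCommGroup E]
    [NormedSpace ℝ E] {f : ℝ → E} (hf : ∀ x, f (-x) = f x) (t : ℝ) :
    ∫ x in 0..-t, f x = -∫ x in 0..t, f x := by
  rw [integral_symm, ← neg_zero, ← integral_comp_neg]
  simp [hf]

lemma eulerSpiral_neg (t : ℝ) : eulerSpiral (-t) = -eulerSpiral t :=
  integral_zero_neg_of_even (fun x => by simp) t

/-- The Euler spiral winds around the two limit points `±√(π/8)·(1 + i)`:
`F(t) → √(π/8)·(1+i)` as `t → +∞` and `F(t) → −√(π/8)·(1+i)` as `t → −∞`.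
Equivalently, `∫_0^∞ cos(v²) dv = ∫_0^∞ sin(v²) dv = √(π/8)`. -/
theorem eulerSpiral_limit_points :
    Tendsto eulerSpiral atTop
      (nhds ((Real.sqrt (Real.pi / 8) : ℂ) * (1 + Complex.I))) ∧
    Tendsto eulerSpiral atBot
      (nhds (-((Real.sqrt (Real.pi / 8) : ℂ) * (1 + Complex.I)))) := by
  have htop : Tendsto eulerSpiral atTop (𝓝 ((√(π / 8) : ℂ) * (1 + I))) := by
    have h := tendsto_integral_cexp_neg_mul_sq (b := -I) (by simp) (by simp)
    rw [cpow_one_half_pi_div_neg_I] at h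
    simp only [neg_neg] at h
    exact h
  refine ⟨htop, ?_⟩
  simpa [Function.comp_def, eulerSpiral_neg] using (htop.comp tendsto_neg_atBot_atTop).neg
end
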